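/- Let [P,Q] be a path presentation with a proper k×k square at position i, and let B_i(P) = P_i + k North steps, B_i(Q) = Q_i + k East steps. Then M[B_i(P), B_i(Q)] is a minor of M[P,Q]. -/

import Mathlib

open Matroid

/-- Steps: `true` is a North step, `false` is an East step. -/
def nCount (w : List Bool) : ℕ := w.count true

def eCount (w : List Bool) : ℕ := w.count false

/-- `P` and `Q` are lattice paths from `(0,0)` to `(m,r)` with `P` never above `Q`. -/
structure IsLatticePair (P Q : List Bool) (m r : ℕ) : Prop where
  lenP : P.length = m + r
  lenQ : Q.length = m + r
  northP : nCount P = r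
  northQ : nCount Q = r
  notAbove : ∀ i, nCount (P.take i) ≤ nCount (Q.take i)

/-- The (1-indexed) positions of the North steps of a path. -/
def northPositions (w : List Bool) : List ℕ :=
  ((List.range w.length).filter (fun j => w.getD j false)).map (· + 1)

/-- `X` is a partial transversal of the intervals `N_i = [l_i, u_i]`, `i < r`, where
`u_i` (resp. `l_i`) is the position of the `i`-th North step of `P` (resp. `Q`). -/
def IsPartialTransversal (P Q : List Bool) (r : ℕ) (X : Set ℕ) : Prop :=
  ∃ f : ℕ → ℕ, Set.InjOn f X ∧ ∀ x ∈ X, f x < r ∧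
    (northPositions Q).getD (f x) 0 ≤ x ∧ x ≤ (northPositions P).getD (f x) 0

/-- `M` is the lattice path matroid `M[P,Q]`: the transversal matroid on `[m+r]`
whose independent sets are the partial transversals of the intervals `N_i`. -/
def IsLPM (M : Matroid ℕ) (P Q : List Bool) (m r : ℕ) : Prop :=
  IsLatticePair P Q m r ∧ M.E = Set.Icc 1 (m + r) ∧
    ∀ X : Set ℕ, M.Indep X ↔ X ⊆ M.E ∧ IsPartialTransversal P Q r X

/-- `[P,Q]` has a `k × k` square at `i`: the length-`i` prefix of `P` has exactly `k`
more East steps than that of `Q`, and the prefix of `Q` has `k` more North steps. -/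
def HasSquareAt (P Q : List Bool) (k i : ℕ) : Prop :=
  eCount (P.take i) = eCount (Q.take i) + k ∧ nCount (Q.take i) = nCount (P.take i) + k

/-- The square-width of a presentation: the largest `k` such that it has a `k × k` square. -/
noncomputable def squareWidth (P Q : List Bool) : ℕ :=
  sSup {k | ∃ i, HasSquareAt P Q k i}

/-- `N` is a minor of `M`: obtained by contracting a set `C` and deleting a set `D`. -/
def IsMinorOf {α : Type*} (N M : Matroid α) : Prop :=
  ∃ C D : Set α, C ⊆ M.E ∧ D ⊆ M.E ∧ Disjoint C D ∧
    N = ((M✶ ↾ (M.E \ C))✶) ↾ ((M.E \ C) \ D)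

/-- An isomorphism between matroids: a bijection of ground sets preserving independence. -/
def MatroidIso {α β : Type*} (M : Matroid α) (N : Matroid β) : Prop :=
  ∃ f : α → β, Set.BijOn f M.E N.E ∧ ∀ X ⊆ M.E, (M.Indep X ↔ N.Indep (f '' X))

/-- `N` is isomorphic to a minor of `M`. -/
def IsIsoMinorOf {α β : Type*} (N : Matroid α) (M : Matroid β) : Prop :=
  ∃ N' : Matroid β, IsMinorOf N' M ∧ MatroidIso N' N

/-- `M` is (isomorphic to) the uniform matroid `U_{r,n}`. -/
def IsUniform {α : Type*} (M : Matroid α) (r n : ℕ) : Prop :=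
  M.E.encard = (n : ℕ∞) ∧ ∀ X ⊆ M.E, (M.Indep X ↔ X.encard ≤ (r : ℕ∞))

/-- The rank (in `ℕ∞`) of a set in a matroid. -/
noncomputable def eRk {α : Type*} (M : Matroid α) (A : Set α) : ℕ∞ :=
  ⨆ I : {I : Set α // M.Indep I ∧ I ⊆ A}, (I : Set α).encard

/-- Binary trees, used to model the cubic trees of branch decompositions. -/
inductive BTree (α : Type*) where
  | leaf : α → BTree α
  | node : BTree α → BTree α → BTree α

def BTree.leafList {α : Type*} : BTree α → List α
  | .leaf a => [a]
  | .node l r => l.leafList ++ r.leafList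

def BTree.subtrees {α : Type*} : BTree α → List (BTree α)
  | .leaf a => [.leaf a]
  | .node l r => .node l r :: (l.subtrees ++ r.subtrees)

/-- The connectivity value `λ(A) = r(A) + r(E \ A) − r(E) + 1`. -/
noncomputable def lamVal {α : Type*} (M : Matroid α) (A : Set α) : ℕ∞ :=
  _root_.eRk M A + _root_.eRk M (M.E \ A) - _root_.eRk M M.E + 1

/-- A branch decomposition of `M`: a (cubic) tree whose leaves are bijectively
labelled by the elements of `M`. -/
def IsBranchDecomp {α : Type*} (M : Matroid α) (t : BTree α) : Prop :=
  t.leafList.Nodup ∧ {x | x ∈ t.leafList} = M.E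

/-- The width of a branch decomposition: the maximum of `λ` over the edges
(equivalently, over the leaf sets of the subtrees). -/
noncomputable def decompWidth {α : Type*} (M : Matroid α) (t : BTree α) : ℕ∞ :=
  (t.subtrees.map (fun s => lamVal M {x | x ∈ s.leafList})).foldr max 0

/-- The branch-width of a matroid. -/
noncomputable def branchWidth {α : Type*} (M : Matroid α) : ℕ∞ :=
  sInf {w | ∃ t : BTree α, IsBranchDecomp M t ∧ decompWidth M t = w}

/-- The lattice path `P(X)` associated to a subset `X` of `[len]`. -/
noncomputable def pathWord (X : Set ℕ) (len : ℕ) : List Bool :=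
  (List.range len).map (fun j => @decide ((j + 1) ∈ X) (Classical.propDecidable _))

def glue (PB QB PT QT : List Bool) (k : ℕ) : List Bool × List Bool :=
  (PB.take (PB.length - k) ++ PT.drop k, QB.take (QB.length - k) ++ QT.drop k)

/-! Contract the North steps of `P` that come after the square, i.e. the upper endpoints `u_j`
of the intervals `N_j` with `j ≥ p + k`, where `p` is the number of North steps of `P_i`, and
delete every other element beyond `i + k`; the ground set becomes `[1, i + k]`. A set `X` there,
joined with the contracted set, is a partial transversal of the intervals of `M[P,Q]` exactly
when `X` is one of `M[B_i(P), B_i(Q)]`. By pigeonhole the contracted elements use up the top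
`r - p - k` intervals; the first `p` intervals are unchanged; and the remaining `k` intervals,
which all start by `i`, have their upper ends cut down to the staircase `i + 1, …, i + k`. As both
endpoint sequences increase, a matching can be taken increasing, and an increasing matching can be
pushed up onto the staircase. -/

open Set

section IntervalTransversal

variable {ι α : Type*}

def IsIntervalTransversal [Preorder α] (J : Set ι) (l u : ι → α) (X : Set α) : Prop :=
  ∃ f : α → ι, InjOn f X ∧ ∀ x ∈ X, f x ∈ J ∧ l (f x) ≤ x ∧ x ≤ u (f x)

section Preorder

variable [Preorder α] {J J' : Set ι} {l u l' u' : ι → α} {X Y : Set α}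

lemma IsIntervalTransversal.mono (h : IsIntervalTransversal J l u X) (hJ : J ⊆ J')
    (hl : ∀ j ∈ J, l' j ≤ l j) (hu : ∀ j ∈ J, u j ≤ u' j) :
    IsIntervalTransversal J' l' u' X := by
  obtain ⟨f, hf, hfX⟩ := h
  refine ⟨f, hf, fun x hx => ?_⟩
  obtain ⟨hJx, hlx, hux⟩ := hfX x hx
  exact ⟨hJ hJx, (hl _ hJx).trans hlx, hux.trans (hu _ hJx)⟩

lemma IsIntervalTransversal.union (hX : IsIntervalTransversal J l u X)
    (hY : IsIntervalTransversal J' l u Y) (hJ : Disjoint J J') :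
    IsIntervalTransversal (J ∪ J') l u (X ∪ Y) := by
  classical
  obtain ⟨f, hf, hfX⟩ := hX
  obtain ⟨g, hg, hgY⟩ := hY
  have hfg : ∀ x ∈ X, ∀ y ∈ Y, f x ≠ g y := fun x hx y hy =>
    hJ.ne_of_mem (hfX x hx).1 (hgY y hy).1
  refine ⟨fun x => if x ∈ X then f x else g x, ?_, ?_⟩
  · rintro a ha b hb hab
    by_cases haX : a ∈ X <;> by_cases hbX : b ∈ X <;> simp only [haX, hbX, if_true, if_false] at hab
    · exact hf haX hbX hab
    · exact absurd hab (hfg a haX b (hb.resolve_left hbX))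
    · exact absurd hab.symm (hfg b hbX a (ha.resolve_left haX))
    · exact hg (ha.resolve_left haX) (hb.resolve_left hbX) hab
  · intro x hx
    by_cases hxX : x ∈ X
    · simp only [hxX, if_true]
      obtain ⟨h₁, h₂⟩ := hfX x hxX
      exact ⟨Or.inl h₁, h₂⟩
    · simp only [hxX, if_false]
      obtain ⟨h₁, h₂⟩ := hgY x (hx.resolve_left hxX)
      exact ⟨Or.inr h₁, h₂⟩

lemma isIntervalTransversal_image [Nonempty ι] (hlu : ∀ j ∈ J, l j ≤ u j) :
    IsIntervalTransversal J l u (u '' J) := by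
  refine ⟨Function.invFunOn u J, Function.invFunOn_injOn_image u J, ?_⟩
  rintro _ ⟨j, hj, rfl⟩
  have hex : ∃ j' ∈ J, u j' = u j := ⟨j, hj, rfl⟩
  have hmem := Function.invFunOn_mem hex
  have heq := Function.invFunOn_eq hex
  exact ⟨hmem, (hlu _ hmem).trans heq.le, heq.ge⟩

end Preorder

lemma IsIntervalTransversal.exists_strictMonoOn [LinearOrder ι] [LinearOrder α]
    {l u : ι → α} {n : ι} {X : Set α} (hl : MonotoneOn l (Iio n)) (hu : MonotoneOn u (Iio n))
    (hX : X.Finite) (h : IsIntervalTransversal (Iio n) l u X) :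
    ∃ g : α → ι, StrictMonoOn g X ∧ ∀ x ∈ X, g x ∈ Iio n ∧ l (g x) ≤ x ∧ x ≤ u (g x) := by
  classical
  obtain ⟨s, rfl⟩ := hX.exists_finset_coe
  induction s using Finset.induction_on_max generalizing n with
  | empty =>
    obtain ⟨f, -, -⟩ := h
    exact ⟨f, by simp [StrictMonoOn], by simp⟩
  | insert a s hlt ih =>
    rw [Finset.coe_insert] at h ⊢
    obtain ⟨f, hf, hfX⟩ := h
    -- `x'` carries the largest index; swap the indices of `a` and `x'` and recurse below it
    obtain ⟨x', hx', hmax⟩ := Finset.exists_max_image (insert a s) f (Finset.insert_nonempty a s)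
    rw [← Finset.mem_coe, Finset.coe_insert] at hx'
    replace hmax : ∀ x ∈ insert a (s : Set α), f x ≤ f x' := fun x hx => hmax x (by simpa using hx)
    have hfx'n : f x' ∈ Iio n := (hfX x' hx').1
    have hswap : MapsTo (Equiv.swap a x') s (insert a s) := by
      intro z hz
      rcases eq_or_ne z x' with rfl | hzx'
      · simp
      · rw [Equiv.swap_apply_of_ne_of_ne (hlt z hz).ne hzx']; exact Or.inr hz
    have hfa_le : f a ≤ f x' := hmax a (mem_insert a _)
    have hsub : IsIntervalTransversal (Iio (f x')) l u (s : Set α) := by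
      refine ⟨f ∘ Equiv.swap a x', hf.comp (Equiv.injective _).injOn hswap, fun z hz => ?_⟩
      have hza : z ≠ a := (hlt z hz).ne
      refine ⟨lt_of_le_of_ne (hmax _ (hswap hz)) fun he => ?_, ?_⟩
      · have := hf (hswap hz) hx' he
        rw [Equiv.swap_apply_eq_iff, Equiv.swap_apply_right] at this
        exact hza this
      · rcases eq_or_ne z x' with rfl | hzx'
        · simp only [Function.comp_apply, Equiv.swap_apply_right]
          exact ⟨(hl (hfX a (mem_insert a _)).1 hfx'n hfa_le).trans (hfX z hx').2.1,
            (hlt z hz).le.trans (hfX a (mem_insert a _)).2.2⟩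
        · simp only [Function.comp_apply, Equiv.swap_apply_of_ne_of_ne hza hzx']
          exact (hfX z (Or.inr hz)).2
    obtain ⟨g, hg, hgX⟩ := ih (hl.mono (Iio_subset_Iio hfx'n.le))
      (hu.mono (Iio_subset_Iio hfx'n.le)) s.finite_toSet hsub
    have hne : ∀ z ∈ (s : Set α), z ≠ a := fun z hz => (hlt z hz).ne
    refine ⟨Function.update g a (f x'), ?_, ?_⟩
    · rintro x hx y (rfl | hy) hxy
      · have hxs : x ∈ (s : Set α) := hx.resolve_left hxy.ne
        rw [Function.update_self, Function.update_of_ne (hne x hxs)]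
        exact (hgX x hxs).1
      · have hxs : x ∈ (s : Set α) := hx.resolve_left fun h => (h ▸ hxy.trans (hlt y hy)).false
        rw [Function.update_of_ne (hne x hxs), Function.update_of_ne (hne y hy)]
        exact hg hxs hy hxy
    · rintro x (rfl | hx)
      · have hx'x : x' ≤ x := hx'.elim (fun h => h.le) fun h => (hlt _ h).le
        have hxa := hfX x (mem_insert x _)
        rw [Function.update_self]
        exact ⟨hfx'n, (hfX x' hx').2.1.trans hx'x, hxa.2.2.trans (hu hxa.1 hfx'n hfa_le)⟩
      · rw [Function.update_of_ne (hne x hx)]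
        exact ⟨((hgX x hx).1).trans hfx'n, (hgX x hx).2⟩

lemma IsIntervalTransversal.of_union_image_Ico [Preorder α] {l u : ℕ → α}
    {a n : ℕ} {X : Set α} (hu : StrictMonoOn u (Iio n))
    (h : IsIntervalTransversal (Iio n) l u (X ∪ u '' Ico a n)) (hX : Disjoint X (u '' Ico a n)) :
    IsIntervalTransversal (Iio a) l u X := by
  obtain ⟨f, hf, hfX⟩ := h
  refine ⟨f, hf.mono subset_union_left, fun x hx => ⟨?_, (hfX x (Or.inl hx)).2⟩⟩
  have hfC : ∀ y ∈ u '' Ico a n, f y ∈ Ico a n := by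
    rintro _ ⟨j, hj, rfl⟩
    obtain ⟨hjn, -, hle⟩ := hfX _ (Or.inr ⟨j, hj, rfl⟩)
    refine ⟨?_, hjn⟩
    by_contra! hlt
    exact lt_irrefl _ ((hu hjn hj.2 (hlt.trans_le hj.1)).trans_le hle)
  -- pigeonhole: `x` and the `n - a` elements of `u '' Ico a n` cannot all be matched into `Ico a n`
  rw [mem_Iio]
  by_contra! hxa
  have hcard := ncard_le_ncard_of_injOn f (s := insert x (u '' Ico a n)) (t := Ico a n)
    (by rintro y (rfl | hy) <;> [exact ⟨hxa, (hfX y (Or.inl hx)).1⟩; exact hfC y hy])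
    (hf.mono (insert_subset (Or.inl hx) subset_union_right))
  rw [ncard_insert_of_notMem (hX.notMem_of_mem_left hx) ((finite_Ico a n).image u),
    (hu.injOn.mono Ico_subset_Iio_self).ncard_image, ncard_Ico_nat] at hcard
  omega

end IntervalTransversal

lemma isIntervalTransversal_staircase {X : Set ℕ} {l u u' g : ℕ → ℕ} {p i k : ℕ}
    (hg : StrictMonoOn g X) (hgX : ∀ x ∈ X, g x ∈ Iio (p + k) ∧ l (g x) ≤ x ∧ x ≤ u (g x))
    (hX : ∀ x ∈ X, x ≤ i + k) (hl : ∀ j < p + k, l j ≤ i) (hu : ∀ j < p, u j ≤ u' j)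
    (hu' : ∀ j, p ≤ j → j < p + k → i + 1 + (j - p) ≤ u' j) :
    IsIntervalTransversal (Iio (p + k)) l u' X := by
  -- the elements above `i` are pushed up onto the staircase, which keeps the matching increasing
  let h : ℕ → ℕ := fun x => if x ≤ i then g x else max (g x) (p + (x - i - 1))
  refine ⟨h, StrictMonoOn.injOn ?_, fun x hx => ?_⟩
  · intro x hx y hy hxy
    have := hg hx hy hxy
    by_cases hxi : x ≤ i <;> by_cases hyi : y ≤ i <;> simp only [h, hxi, hyi, if_true, if_false]
    · exact this
    · exact this.trans_le (le_max_left _ _)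
    · omega
    · exact max_lt_max this (by omega)
  · obtain ⟨hgk, hgl, hgu⟩ := hgX x hx
    have hxk := hX x hx
    by_cases hxi : x ≤ i
    · simp only [h, hxi, if_true]
      refine ⟨hgk, hgl, ?_⟩
      by_cases hgp : g x < p
      · exact hgu.trans (hu _ hgp)
      · exact le_trans (by omega) (hu' _ (not_lt.1 hgp) hgk)
    · simp only [h, hxi, if_false]
      have hmk : max (g x) (p + (x - i - 1)) < p + k := max_lt hgk (by omega)
      refine ⟨hmk, (hl _ hmk).trans (by omega), le_trans ?_ (hu' _ (by omega) hmk)⟩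
      have := le_max_right (g x) (p + (x - i - 1))
      omega

namespace LatticePath

-- the position (from `1`) of the `j`-th North step (from `0`); junk value `0` once `j ≥ nCount w`
def northPos (w : List Bool) (j : ℕ) : ℕ := (northPositions w).getD j 0

lemma northPositions_cons (x : Bool) (w : List Bool) :
    northPositions (x :: w) = (if x then [1] else []) ++ (northPositions w).map (· + 1) := by
  unfold northPositions
  rw [List.length_cons, List.range_succ_eq_map, List.filter_cons, List.filter_map]
  have : ((fun j => (x :: w).getD j false) ∘ Nat.succ) = fun j => w.getD j false := by
    funext j; simp
  rw [this]
  cases x <;> simp [List.map_map]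

lemma length_northPositions (w : List Bool) : (northPositions w).length = nCount w := by
  induction w with
  | nil => simp [northPositions, nCount]
  | cons x w ih => cases x <;> simpa [northPositions_cons, nCount] using ih

lemma northPositions_append (a b : List Bool) :
    northPositions (a ++ b) = northPositions a ++ (northPositions b).map (· + a.length) := by
  induction a with
  | nil => simp [northPositions]
  | cons x a ih =>
    simp only [List.cons_append, northPositions_cons, ih, List.map_append, List.map_map,
      List.append_assoc, List.length_cons]
    congr 3

lemma northPositions_replicate_true (k : ℕ) :
    northPositions (List.replicate k true) = (List.range k).map (· + 1) := by
  induction k with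
  | zero => simp [northPositions]
  | succ k ih => simp [List.replicate_succ, northPositions_cons, ih, List.range_succ_eq_map,
      List.map_map, Function.comp_def]

lemma northPos_append_of_lt {a : List Bool} (b : List Bool) {j : ℕ} (h : j < nCount a) :
    northPos (a ++ b) j = northPos a j := by
  rw [northPos, northPositions_append, List.getD_append _ _ _ _ (by rwa [length_northPositions])]
  rfl

lemma northPos_append_replicate_true {a : List Bool} {k j : ℕ} (h₁ : nCount a ≤ j)
    (h₂ : j < nCount a + k) :
    northPos (a ++ List.replicate k true) j = a.length + 1 + (j - nCount a) := by
  rw [northPos, northPositions_append,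
    List.getD_append_right _ _ _ _ (by rwa [length_northPositions]), length_northPositions,
    northPositions_replicate_true, List.map_map,
    List.getD_eq_getElem _ _ (by simp only [List.length_map, List.length_range]; omega)]
  simp only [List.getElem_map, List.getElem_range, Function.comp_apply]
  omega

lemma nCount_take_mono (w : List Bool) {s t : ℕ} (h : s ≤ t) :
    nCount (w.take s) ≤ nCount (w.take t) :=
  ((List.take_prefix_take_left h).sublist).count_le true

lemma nCount_take_le (w : List Bool) (t : ℕ) : nCount (w.take t) ≤ nCount w :=
  (w.take_sublist t).count_le true

lemma nCount_take_add_le (w : List Bool) (s t : ℕ) :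
    nCount (w.take (s + t)) ≤ nCount (w.take s) + t := by
  rw [nCount, List.take_add, List.count_append]
  have := (List.count_le_length (a := true) (l := (w.drop s).take t)).trans
    (List.length_take_le t _)
  exact Nat.add_le_add_left this _

lemma eCount_add_nCount (w : List Bool) : eCount w + nCount w = w.length :=
  List.count_false_add_count_true w

lemma northPos_cons_false {w : List Bool} {j : ℕ} (hj : j < nCount w) :
    northPos (false :: w) j = northPos w j + 1 := by
  rw [← length_northPositions] at hj
  simp [northPos, northPositions_cons, List.getElem?_eq_getElem hj]

lemma northPos_cons_true_succ {w : List Bool} {j : ℕ} (hj : j < nCount w) :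
    northPos (true :: w) (j + 1) = northPos w j + 1 := by
  rw [← length_northPositions] at hj
  simp [northPos, northPositions_cons, List.getElem?_eq_getElem hj]

lemma exists_northPos_eq {w : List Bool} {j : ℕ} (hj : j < nCount w) :
    ∃ t, northPos w j = t + 1 ∧ nCount (w.take t) = j ∧ nCount (w.take (t + 1)) = j + 1 := by
  induction w generalizing j with
  | nil => simp [nCount] at hj
  | cons x w ih =>
    cases x with
    | false =>
      have hj' : j < nCount w := by simpa [nCount] using hj
      obtain ⟨t, ht, h₁, h₂⟩ := ih hj'
      exact ⟨t + 1, by rw [northPos_cons_false hj', ht], by simpa [nCount] using h₁,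
        by simpa [nCount] using h₂⟩
    | true =>
      cases j with
      | zero => exact ⟨0, by simp [northPos, northPositions_cons], by simp [nCount],
          by simp [nCount]⟩
      | succ j =>
        have hj' : j < nCount w := by simpa [nCount] using hj
        obtain ⟨t, ht, h₁, h₂⟩ := ih hj'
        exact ⟨t + 1, by rw [northPos_cons_true_succ hj', ht], by simpa [nCount] using h₁,
          by simpa [nCount] using h₂⟩

lemma northPos_le_iff {w : List Bool} {j : ℕ} (hj : j < nCount w) (t : ℕ) :
    northPos w j ≤ t ↔ j < nCount (w.take t) := by
  obtain ⟨s, hs, h₁, h₂⟩ := exists_northPos_eq hj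
  rw [hs]
  constructor
  · intro h; have := nCount_take_mono w h; omega
  · intro h; by_contra! h'; have := nCount_take_mono w (Nat.le_of_lt_succ h'); omega

lemma northPos_le_length {w : List Bool} {j : ℕ} (hj : j < nCount w) : northPos w j ≤ w.length :=
  (northPos_le_iff hj _).2 (by rwa [List.take_length])

lemma strictMonoOn_northPos (w : List Bool) : StrictMonoOn (northPos w) (Iio (nCount w)) := by
  intro a ha b hb hab
  by_contra! h
  obtain ⟨s, hs, -, h₂⟩ := exists_northPos_eq (w := w) (j := a) ha
  have := (northPos_le_iff hb _).1 h
  rw [hs, h₂] at this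
  omega

lemma northPos_take_append {w : List Bool} {t j : ℕ} (b : List Bool)
    (hj : j < nCount (w.take t)) : northPos (w.take t ++ b) j = northPos w j := by
  rw [northPos_append_of_lt _ hj]
  conv_rhs => rw [← List.take_append_drop t w]
  exact (northPos_append_of_lt _ hj).symm

lemma northPos_take_append_replicate_true {w : List Bool} {t k j : ℕ} (ht : t ≤ w.length)
    (h₁ : nCount (w.take t) ≤ j) (h₂ : j < nCount (w.take t) + k) :
    northPos (w.take t ++ List.replicate k true) j = t + 1 + (j - nCount (w.take t)) := by
  rw [northPos_append_replicate_true h₁ h₂, List.length_take_of_le ht]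

lemma add_sub_lt_northPos {w : List Bool} {t j : ℕ} (h₁ : nCount (w.take t) ≤ j)
    (h₂ : j < nCount w) : t + (j - nCount (w.take t)) < northPos w j := by
  by_contra! h
  have := ((northPos_le_iff h₂ _).1 h).trans_le (nCount_take_add_le w t _)
  omega

lemma isPartialTransversal_iff (P Q : List Bool) (r : ℕ) (X : Set ℕ) :
    IsPartialTransversal P Q r X ↔ IsIntervalTransversal (Iio r) (northPos Q) (northPos P) X :=
  Iff.rfl

end LatticePath

open LatticePath

section Square

variable {P Q : List Bool} {m r k i : ℕ}

lemma IsLatticePair.northPos_le (hPQ : IsLatticePair P Q m r) {j : ℕ} (hj : j < r) :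
    northPos Q j ≤ northPos P j := by
  have hjP : j < nCount P := hPQ.northP ▸ hj
  have hjQ : j < nCount Q := hPQ.northQ ▸ hj
  exact (northPos_le_iff hjQ _).2 (((northPos_le_iff hjP _).1 le_rfl).trans_le (hPQ.notAbove _))

lemma IsLatticePair.image_northPos_Ico_subset (hPQ : IsLatticePair P Q m r) :
    northPos P '' Ico (nCount (P.take i) + k) r ⊆ Ioc (i + k) (m + r) := by
  rintro _ ⟨j, ⟨hj₁, hj₂⟩, rfl⟩
  have hjP : j < nCount P := hPQ.northP ▸ hj₂
  have := add_sub_lt_northPos (t := i) (by omega) hjP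
  exact ⟨by omega, hPQ.lenP ▸ northPos_le_length hjP⟩

lemma HasSquareAt.northPos_le (hsq : HasSquareAt P Q k i) {j : ℕ}
    (hj : j < nCount (P.take i) + k) : northPos Q j ≤ i := by
  rw [← hsq.2] at hj
  exact (northPos_le_iff (hj.trans_le (nCount_take_le Q i)) _).2 hj

lemma IsLatticePair.add_le_of_hasSquareAt (hPQ : IsLatticePair P Q m r)
    (hsq : HasSquareAt P Q k i) :
    nCount (P.take i) + k ≤ r :=
  hsq.2 ▸ hPQ.northQ ▸ nCount_take_le Q i

lemma isPartialTransversal_union_of_square (hPQ : IsLatticePair P Q m r)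
    (hsq : HasSquareAt P Q k i) (hi : i ≤ m + r) {X : Set ℕ}
    (hX : IsPartialTransversal (P.take i ++ List.replicate k true)
      (Q.take i ++ List.replicate k false) (nCount (P.take i) + k) X) :
    IsPartialTransversal P Q r (X ∪ northPos P '' Ico (nCount (P.take i) + k) r) := by
  have hpk := hPQ.add_le_of_hasSquareAt hsq
  rw [isPartialTransversal_iff] at hX ⊢
  have hlow : IsIntervalTransversal (Iio (nCount (P.take i) + k)) (northPos Q) (northPos P) X := by
    refine hX.mono subset_rfl (fun j hj => (northPos_take_append _ (hsq.2 ▸ hj)).ge) fun j hj => ?_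
    rcases lt_or_ge j (nCount (P.take i)) with hjp | hjp
    · exact (northPos_take_append _ hjp).le
    · rw [northPos_take_append_replicate_true (hPQ.lenP ▸ hi) hjp hj]
      have := add_sub_lt_northPos hjp (hPQ.northP ▸ lt_of_lt_of_le hj hpk)
      omega
  have := hlow.union (isIntervalTransversal_image fun j hj => hPQ.northPos_le hj.2)
    (Iio_disjoint_Ici le_rfl |>.mono_right Ico_subset_Ici_self)
  rwa [Iio_union_Ico_eq_Iio hpk] at this

lemma isPartialTransversal_of_union_square (hPQ : IsLatticePair P Q m r)
    (hsq : HasSquareAt P Q k i) (hi : i ≤ m + r) {X : Set ℕ} (hX : X ⊆ Iic (i + k))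
    (h : IsPartialTransversal P Q r (X ∪ northPos P '' Ico (nCount (P.take i) + k) r)) :
    IsPartialTransversal (P.take i ++ List.replicate k true)
      (Q.take i ++ List.replicate k false) (nCount (P.take i) + k) X := by
  have hpk := hPQ.add_le_of_hasSquareAt hsq
  have hmonoP := strictMonoOn_northPos P
  have hmonoQ := (strictMonoOn_northPos Q).monotoneOn
  rw [hPQ.northP] at hmonoP
  rw [hPQ.northQ] at hmonoQ
  have hdisj : Disjoint X (northPos P '' Ico (nCount (P.take i) + k) r) :=
    disjoint_left.2 fun x hx hxC => (hPQ.image_northPos_Ico_subset hxC).1.not_ge (hX hx)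
  rw [isPartialTransversal_iff] at h ⊢
  obtain ⟨g, hg, hgX⟩ := (h.of_union_image_Ico hmonoP hdisj).exists_strictMonoOn
    (hmonoQ.mono (Iio_subset_Iio hpk)) (hmonoP.monotoneOn.mono (Iio_subset_Iio hpk))
    ((finite_Iic _).subset hX)
  refine (isIntervalTransversal_staircase hg hgX (fun x hx => hX hx) (fun _ => hsq.northPos_le)
    (fun j hj => (northPos_take_append _ hj).ge)
    (fun j h₁ h₂ => (northPos_take_append_replicate_true (hPQ.lenP ▸ hi) h₁ h₂).ge)).mono
    subset_rfl (fun j hj => (northPos_take_append _ (hsq.2 ▸ hj)).le) fun _ _ => le_rfl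

lemma isPartialTransversal_union_iff_of_square (hPQ : IsLatticePair P Q m r)
    (hsq : HasSquareAt P Q k i) (hi : i ≤ m + r) {X : Set ℕ} (hX : X ⊆ Iic (i + k)) :
    IsPartialTransversal P Q r (X ∪ northPos P '' Ico (nCount (P.take i) + k) r) ↔
      IsPartialTransversal (P.take i ++ List.replicate k true)
        (Q.take i ++ List.replicate k false) (nCount (P.take i) + k) X :=
  ⟨isPartialTransversal_of_union_square hPQ hsq hi hX,
    isPartialTransversal_union_of_square hPQ hsq hi⟩

end Square

section Minor

variable {α : Type*} {M N : Matroid α} {C D : Set α}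

lemma isMinorOf_contract_delete (hC : C ⊆ M.E) (hD : D ⊆ M.E) (hCD : Disjoint C D) :
    IsMinorOf (M ／ C ＼ D) M :=
  ⟨C, D, hC, hD, hCD, rfl⟩

lemma IsMinorOf.isIsoMinorOf (h : IsMinorOf N M) : IsIsoMinorOf N M :=
  ⟨N, h, id, bijOn_id _, by simp⟩

lemma eq_contract_delete_of_indep_iff (hC : M.Indep C) (hE : N.E = (M.E \ C) \ D)
    (h : ∀ X ⊆ N.E, N.Indep X ↔ M.Indep (X ∪ C)) : N = M ／ C ＼ D := by
  refine ext_indep hE fun X hX => ?_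
  rw [delete_indep_iff, hC.contract_indep_iff, h X hX]
  rw [hE, subset_sdiff, subset_sdiff] at hX
  exact ⟨fun hXC => ⟨⟨hX.1.2, hXC⟩, hX.2⟩, fun h => h.1.2⟩

end Minor

/-- If `[P,Q]` has a proper `k × k` square at `i`, then the lattice path matroid of
`[B_i(P), B_i(Q)]`, where `B_i(P) = P_i + k` North steps and `B_i(Q) = Q_i + k` East
steps, is a minor of `M[P,Q]`. -/
theorem stmt_13 (P Q : List Bool) (m r k i : ℕ) (M MB : Matroid ℕ)
    (hM : IsLPM M P Q m r) (hsq : HasSquareAt P Q k i)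
    (hproper : k + 1 ≤ i ∧ i ≤ m + r - k - 1)
    (hMB : IsLPM MB (P.take i ++ List.replicate k true)
      (Q.take i ++ List.replicate k false)
      (eCount (P.take i)) (nCount (P.take i) + k)) :
    IsIsoMinorOf MB M := by
  obtain ⟨hPQ, hE, hind⟩ := hM
  obtain ⟨-, hEB, hindB⟩ := hMB
  have hi : i ≤ m + r := by omega
  set C := northPos P '' Ico (nCount (P.take i) + k) r
  have hC : C ⊆ Ioc (i + k) (m + r) := hPQ.image_northPos_Ico_subset
  have hIoc : Ioc (i + k) (m + r) ⊆ M.E := fun x ⟨hx₁, hx₂⟩ => by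
    rw [hE]; exact ⟨by omega, hx₂⟩
  have hCind : M.Indep C := (hind C).2 ⟨hC.trans hIoc,
    by simpa using isPartialTransversal_union_of_square hPQ hsq hi (X := ∅) ⟨id, by simp, by simp⟩⟩
  have hEB' : MB.E = Icc 1 (i + k) := by
    rw [hEB, ← add_assoc, eCount_add_nCount, List.length_take_of_le (hPQ.lenP ▸ hi)]
  have hMB : MB = M ／ C ＼ (Ioc (i + k) (m + r) \ C) := by
    refine eq_contract_delete_of_indep_iff hCind ?_ fun X hX => ?_
    · rw [hEB', sdiff_sdiff, union_sdiff_cancel hC, hE]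
      ext x
      simp only [mem_sdiff, mem_Icc, mem_Ioc]
      omega
    · rw [hEB'] at hX
      have hXE : X ⊆ M.E := hX.trans (hE ▸ Icc_subset_Icc_right (by omega))
      rw [hindB, hind, hEB', union_subset_iff,
        isPartialTransversal_union_iff_of_square hPQ hsq hi (hX.trans Icc_subset_Iic_self)]
      simp only [hX, hXE, hC.trans hIoc, and_self, true_and]
  rw [hMB]
  exact (isMinorOf_contract_delete (hC.trans hIoc) (sdiff_subset.trans hIoc)
    disjoint_sdiff_right).isIsoMinorOf
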